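/- For 0 < σ < 1 < θ and all h with 0 < h ≤ (1/6)^θ, the sup of first-order differences satisfies sup_{x∈ℝ} |w_{σ,θ}(x+h) − w_{σ,θ}(x)| = h^σ-comparable from below: in fact the essential supremum over x ∈ (a_{2,θ}−h, a_{2,θ}) of |w_{σ,θ}(x+h) − w_{σ,θ}(x)| equals h^σ. Consequently ‖Δ_h w_{σ,θ}‖_{L_∞(ℝ)} ≍ h^σ, so that w_{σ,θ} ∈ B^σ_{∞,∞}(ℝ) but w_{σ,θ} ∉ B^σ_{∞,q}(ℝ) for any q < ∞. -/

import Mathlib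

open MeasureTheory Real Set

noncomputable def zetaR (θ : ℝ) : ℝ := ∑' n : ℕ, ((n : ℝ) + 1) ^ (-θ)

noncomputable def aSeq (θ : ℝ) (n : ℕ) : ℝ :=
  4 * ∑ j ∈ Finset.Icc 1 (n - 1), (j : ℝ) ^ (-θ)

noncomputable def wPiece (σ θ : ℝ) (n : ℕ) (ξ : ℝ) : ℝ :=
  if ξ < aSeq θ n + (n : ℝ) ^ (-θ) then (ξ - aSeq θ n) ^ σ
  else if ξ < aSeq θ n + 2 * (n : ℝ) ^ (-θ) then (n : ℝ) ^ (-(θ * σ))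
  else if ξ < aSeq θ n + 3 * (n : ℝ) ^ (-θ) then (aSeq θ n + 3 * (n : ℝ) ^ (-θ) - ξ) ^ σ
  else 0

open Classical in
noncomputable def wFn (σ θ : ℝ) (ξ : ℝ) : ℝ :=
  if h : ∃ n : ℕ, 2 ≤ n ∧ aSeq θ n ≤ ξ ∧ ξ < aSeq θ (n + 1) then wPiece σ θ h.choose ξ
  else 0

/-!
On each piece `[a_n, a_{n+1})` the bump is the `σ`-th power of a trapezoidal tent with slopes
`±1`, so `w = T ^ σ` for a nonnegative `1`-Lipschitz function `T`. Since
`|u ^ σ - v ^ σ| ≤ |u - v| ^ σ`, the function `w` is `σ`-Hölder with constant `1`, whence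
`‖Δ_h w‖_∞ ≤ |h| ^ σ`. Conversely `w` vanishes left of `4 = a_2` and equals `(ξ - 4) ^ σ` just
to the right of it, so `Δ_h w (4) = h ^ σ`; by continuity this point value bounds the essential
supremum over `(4 - h, 4)` from below. The lower bound `h ^ σ` makes the integrand of the
`B^σ_{∞,q}` quasi-norm at least `t⁻¹`, which is not integrable at `0`.
-/
open scoped ENNReal Topology

theorem Real.abs_rpow_sub_rpow_le {σ : ℝ} (hσ0 : 0 ≤ σ) (hσ1 : σ ≤ 1) {u v : ℝ} (hu : 0 ≤ u)
    (hv : 0 ≤ v) : |u ^ σ - v ^ σ| ≤ |u - v| ^ σ := by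
  wlog hvu : v ≤ u generalizing u v
  · rw [abs_sub_comm, abs_sub_comm u]
    exact this hv hu (le_of_not_ge hvu)
  have hsub : u ^ σ ≤ (u - v) ^ σ + v ^ σ := by
    simpa using Real.rpow_add_le_add_rpow (sub_nonneg.2 hvu) hv hσ0 hσ1
  rw [abs_of_nonneg (sub_nonneg.2 (Real.rpow_le_rpow hv hvu hσ0)),
    abs_of_nonneg (sub_nonneg.2 hvu)]
  linarith

theorem enorm_le_eLpNormEssSup_restrict_Ioo {E : Type*} [NormedAddCommGroup E] {f : ℝ → E}
    {a b : ℝ} (hab : a < b) (hf : ContinuousWithinAt f (Iio b) b) :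
    ‖f b‖ₑ ≤ eLpNormEssSup f (volume.restrict (Ioo a b)) := by
  by_contra! hlt
  obtain ⟨c, hsup, hc⟩ := exists_between hlt
  have hnear : ∀ᶠ x in 𝓝[<] b, c < ‖f x‖ₑ := hf.enorm.eventually (lt_mem_nhds hc)
  obtain ⟨l, hl, hsub⟩ := (mem_nhdsLT_iff_exists_mem_Ico_Ioo_subset hab).1 hnear
  have hae : ∀ᵐ x, x ∈ Ioo l b → ‖f x‖ₑ < c :=
    (ae_restrict_iff' measurableSet_Ioo).1 <|
      ae_restrict_of_ae_restrict_of_subset (Ioo_subset_Ioo_left hl.1) (ae_lt_of_essSup_lt hsup)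
  have hnull : volume (Ioo l b) = 0 :=
    measure_eq_zero_iff_ae_notMem.2 (hae.mono fun x hx hxs => (hx hxs).not_gt (hsub hxs))
  rw [Real.volume_Ioo, ENNReal.ofReal_eq_zero] at hnull
  linarith [hl.2]

theorem eLpNorm_top_sub_shift_le {f : ℝ → ℝ} {σ : ℝ} (hf : ∀ x y, |f y - f x| ≤ |y - x| ^ σ)
    (h : ℝ) (μ : Measure ℝ) :
    eLpNorm (fun x => f (x + h) - f x) ⊤ μ ≤ ENNReal.ofReal (|h| ^ σ) := by
  rw [eLpNorm_exponent_top]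
  refine eLpNormEssSup_le_of_ae_bound (ae_of_all _ fun x => ?_)
  simpa using hf x (x + h)

theorem lintegral_Ioc_inv_eq_top {ε : ℝ} (hε : 0 < ε) :
    ∫⁻ t in Ioc 0 ε, ENNReal.ofReal t⁻¹ = ∞ := by
  have hnot : ¬ IntegrableOn (fun t : ℝ => t⁻¹) (Ioc 0 ε) := by
    rw [← intervalIntegrable_iff_integrableOn_Ioc_of_le hε.le, intervalIntegrable_inv_iff]
    simp [hε.ne, hε.le]
  by_contra hfin
  exact hnot ((lintegral_ofReal_ne_top_iff_integrable (by fun_prop)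
    ((ae_restrict_iff' measurableSet_Ioc).2 (ae_of_all _ fun t ht => inv_nonneg.2 ht.1.le))).1 hfin)

theorem lintegral_rpow_mul_rpow_eq_top_of_rpow_le {F : ℝ → ℝ≥0∞} {σ q ε : ℝ} (hq : 0 ≤ q)
    (hε : 0 < ε) (hF : ∀ t ∈ Ioc 0 ε, ENNReal.ofReal (t ^ σ) ≤ F t) :
    ∫⁻ t in Ioc 0 ε, F t ^ q * ENNReal.ofReal (t ^ (-(σ * q) - 1)) = ∞ := by
  refine eq_top_iff.2 ((lintegral_Ioc_inv_eq_top hε).symm.le.trans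
    (setLIntegral_mono' measurableSet_Ioc fun t ht => ?_))
  have ht0 := ht.1
  calc ENNReal.ofReal t⁻¹
      = ENNReal.ofReal (t ^ σ) ^ q * ENNReal.ofReal (t ^ (-(σ * q) - 1)) := by
        rw [ENNReal.ofReal_rpow_of_nonneg (Real.rpow_nonneg ht0.le σ) hq, ← Real.rpow_mul ht0.le,
          ← ENNReal.ofReal_mul (Real.rpow_nonneg ht0.le _), ← Real.rpow_add ht0,
          show σ * q + (-(σ * q) - 1) = -1 by ring, Real.rpow_neg_one]
    _ ≤ F t ^ q * ENNReal.ofReal (t ^ (-(σ * q) - 1)) := by gcongr; exact hF t ht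

def tent (a d ξ : ℝ) : ℝ := max 0 (min (ξ - a) (min d (a + 3 * d - ξ)))

theorem tent_nonneg (a d ξ : ℝ) : 0 ≤ tent a d ξ := le_max_left _ _

theorem tent_le (a d ξ : ℝ) (hd : 0 ≤ d) : tent a d ξ ≤ d :=
  max_le hd ((min_le_right _ _).trans (min_le_left _ _))

theorem tent_le_sub_left {a d ξ : ℝ} (h : a ≤ ξ) : tent a d ξ ≤ ξ - a :=
  max_le (sub_nonneg.2 h) (min_le_left _ _)

theorem tent_le_sub_right {a d ξ b : ℝ} (hb : a + 3 * d ≤ b) (h : ξ ≤ b) : tent a d ξ ≤ b - ξ :=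
  max_le (sub_nonneg.2 h) (((min_le_right _ _).trans (min_le_right _ _)).trans (by linarith))

theorem tent_eq_sub_left {a d ξ : ℝ} (h : a ≤ ξ) (hξ : ξ ≤ a + d) : tent a d ξ = ξ - a := by
  unfold tent
  rw [min_eq_left (le_min (by linarith) (by linarith)), max_eq_right (by linarith)]

theorem tent_lipschitzWith (a d : ℝ) : LipschitzWith 1 (tent a d) := by
  have hl : LipschitzWith 1 fun ξ : ℝ => ξ - a := by
    simpa using LipschitzWith.id.sub (LipschitzWith.const a)
  have hr : LipschitzWith 1 fun ξ : ℝ => a + 3 * d - ξ := by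
    simpa using (LipschitzWith.const (a + 3 * d)).sub LipschitzWith.id
  exact ((hl.min ((LipschitzWith.const d).min hr)).const_max 0).weaken (by simp)

theorem wPiece_eq_tent_rpow {σ θ : ℝ} (hσ : 0 < σ) (n : ℕ) {ξ : ℝ} (hξ : aSeq θ n ≤ ξ) :
    wPiece σ θ n ξ = tent (aSeq θ n) ((n : ℝ) ^ (-θ)) ξ ^ σ := by
  have hd : 0 ≤ (n : ℝ) ^ (-θ) := Real.rpow_nonneg (Nat.cast_nonneg n) _
  unfold wPiece
  rw [show -(θ * σ) = -θ * σ by ring, Real.rpow_mul (Nat.cast_nonneg n)]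
  generalize aSeq θ n = a at *
  generalize (n : ℝ) ^ (-θ) = d at *
  split_ifs with h1 h2 h3
  · rw [tent_eq_sub_left hξ h1.le]
  · congr 1
    unfold tent
    grind
  · congr 1
    unfold tent
    grind
  · rw [show tent a d ξ = 0 by unfold tent; grind, Real.zero_rpow hσ.ne']

theorem aSeq_succ (θ : ℝ) {n : ℕ} (hn : 1 ≤ n) :
    aSeq θ (n + 1) = aSeq θ n + 4 * (n : ℝ) ^ (-θ) := by
  obtain ⟨m, rfl⟩ := Nat.exists_eq_add_of_le' hn
  simp only [aSeq, Nat.add_sub_cancel, Finset.sum_Icc_succ_top (Nat.le_add_left 1 m)]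
  ring

theorem aSeq_mono (θ : ℝ) : Monotone (aSeq θ) := fun m n hmn =>
  mul_le_mul_of_nonneg_left (Finset.sum_le_sum_of_subset_of_nonneg
    (Finset.Icc_subset_Icc_right (Nat.sub_le_sub_right hmn 1))
    fun j _ _ => Real.rpow_nonneg (Nat.cast_nonneg j) _) (by norm_num)

theorem aSeq_two (θ : ℝ) : aSeq θ 2 = 4 := by
  simp [aSeq]

theorem eq_of_mem_Ico_aSeq {θ ξ : ℝ} {m n : ℕ} (hm : ξ ∈ Ico (aSeq θ m) (aSeq θ (m + 1)))
    (hn : ξ ∈ Ico (aSeq θ n) (aSeq θ (n + 1))) : m = n := by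
  by_contra hne
  exact Set.disjoint_left.1 ((aSeq_mono θ).pairwise_disjoint_on_Ico_succ hne) hm hn

open Classical in
noncomputable def tentTrain (θ ξ : ℝ) : ℝ :=
  if h : ∃ n : ℕ, 2 ≤ n ∧ aSeq θ n ≤ ξ ∧ ξ < aSeq θ (n + 1) then
    tent (aSeq θ h.choose) ((h.choose : ℝ) ^ (-θ)) ξ
  else 0

theorem wFn_eq_tentTrain_rpow {σ : ℝ} (hσ : 0 < σ) (θ ξ : ℝ) :
    wFn σ θ ξ = tentTrain θ ξ ^ σ := by
  unfold wFn tentTrain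
  split_ifs with h
  · exact wPiece_eq_tent_rpow hσ _ h.choose_spec.2.1
  · exact (Real.zero_rpow hσ.ne').symm

theorem tentTrain_nonneg (θ ξ : ℝ) : 0 ≤ tentTrain θ ξ := by
  unfold tentTrain
  split_ifs
  exacts [tent_nonneg _ _ _, le_rfl]

theorem tentTrain_eq {θ ξ : ℝ} {n : ℕ} (hn : 2 ≤ n) (hξ : ξ ∈ Ico (aSeq θ n) (aSeq θ (n + 1))) :
    tentTrain θ ξ = tent (aSeq θ n) ((n : ℝ) ^ (-θ)) ξ := by
  have hex : ∃ k : ℕ, 2 ≤ k ∧ aSeq θ k ≤ ξ ∧ ξ < aSeq θ (k + 1) := ⟨n, hn, hξ⟩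
  have hk : hex.choose = n := eq_of_mem_Ico_aSeq hex.choose_spec.2 hξ
  unfold tentTrain
  rw [dif_pos hex, hk]

theorem tentTrain_eq_zero {θ ξ : ℝ} (h : ¬∃ n : ℕ, 2 ≤ n ∧ aSeq θ n ≤ ξ ∧ ξ < aSeq θ (n + 1)) :
    tentTrain θ ξ = 0 := by
  unfold tentTrain
  rw [dif_neg h]

theorem tentTrain_le_sub_aSeq {θ ξ : ℝ} {n : ℕ} (h : aSeq θ n ≤ ξ) :
    tentTrain θ ξ ≤ ξ - aSeq θ n := by
  by_cases hex : ∃ k : ℕ, 2 ≤ k ∧ aSeq θ k ≤ ξ ∧ ξ < aSeq θ (k + 1)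
  · obtain ⟨k, hk, hkξ, hξk⟩ := hex
    rw [tentTrain_eq hk ⟨hkξ, hξk⟩]
    refine (tent_le_sub_left hkξ).trans (sub_le_sub_left ?_ ξ)
    refine aSeq_mono θ (le_of_not_gt fun hkn => ?_)
    linarith [aSeq_mono θ (Nat.succ_le_of_lt hkn)]
  · rw [tentTrain_eq_zero hex]
    linarith

theorem tentTrain_le_aSeq_sub {θ ξ : ℝ} {n : ℕ} (h : ξ ≤ aSeq θ n) :
    tentTrain θ ξ ≤ aSeq θ n - ξ := by
  by_cases hex : ∃ k : ℕ, 2 ≤ k ∧ aSeq θ k ≤ ξ ∧ ξ < aSeq θ (k + 1)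
  · obtain ⟨k, hk, hkξ, hξk⟩ := hex
    rw [tentTrain_eq hk ⟨hkξ, hξk⟩]
    rcases lt_or_ge k n with hkn | hnk
    · have hd : 0 ≤ (k : ℝ) ^ (-θ) := Real.rpow_nonneg (Nat.cast_nonneg k) _
      refine tent_le_sub_right ?_ (hξk.le.trans (aSeq_mono θ (Nat.succ_le_of_lt hkn)))
      linarith [aSeq_succ θ (n := k) (by omega), aSeq_mono θ (Nat.succ_le_of_lt hkn)]
    · linarith [tent_le_sub_left (d := (k : ℝ) ^ (-θ)) hkξ, aSeq_mono θ hnk]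
  · rw [tentTrain_eq_zero hex]
    linarith

theorem abs_tentTrain_sub_le {θ x y : ℝ} (hxy : x ≤ y) :
    |tentTrain θ y - tentTrain θ x| ≤ y - x := by
  -- `z` will be a node `a_m` between `x` and `y`, where the train vanishes.
  have barrier : ∀ z, tentTrain θ x ≤ z - x → tentTrain θ y ≤ y - z →
      |tentTrain θ y - tentTrain θ x| ≤ y - x := fun z hx hy =>
    abs_sub_le_iff.2 ⟨by linarith [tentTrain_nonneg θ x], by linarith [tentTrain_nonneg θ y]⟩
  by_cases hx : ∃ n : ℕ, 2 ≤ n ∧ aSeq θ n ≤ x ∧ x < aSeq θ (n + 1)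
  · obtain ⟨n, hn, hnx, hxn⟩ := hx
    by_cases hy : y < aSeq θ (n + 1)
    · rw [tentTrain_eq hn ⟨hnx, hxn⟩, tentTrain_eq hn ⟨hnx.trans hxy, hy⟩,
        ← abs_of_nonneg (sub_nonneg.2 hxy)]
      simpa [Real.dist_eq] using (tent_lipschitzWith _ _).dist_le_mul y x
    · exact barrier _ (tentTrain_le_aSeq_sub hxn.le) (tentTrain_le_sub_aSeq (not_lt.1 hy))
  · by_cases hy : ∃ m : ℕ, 2 ≤ m ∧ aSeq θ m ≤ y ∧ y < aSeq θ (m + 1)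
    · obtain ⟨m, hm, hmy, hym⟩ := hy
      have hxm : x ≤ aSeq θ m := le_of_not_ge fun h => hx ⟨m, hm, h, hxy.trans_lt hym⟩
      exact barrier _ (tentTrain_le_aSeq_sub hxm) (tentTrain_le_sub_aSeq hmy)
    · rw [tentTrain_eq_zero hx, tentTrain_eq_zero hy, sub_zero, abs_zero]
      linarith

theorem tentTrain_lipschitzWith (θ : ℝ) : LipschitzWith 1 (tentTrain θ) := by
  refine LipschitzWith.of_dist_le_mul fun x y => ?_
  rw [NNReal.coe_one, one_mul, Real.dist_eq, Real.dist_eq]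
  rcases le_total x y with hxy | hyx
  · rw [abs_sub_comm, abs_sub_comm x, abs_of_nonneg (sub_nonneg.2 hxy)]
    exact abs_tentTrain_sub_le hxy
  · rw [abs_of_nonneg (sub_nonneg.2 hyx)]
    exact abs_tentTrain_sub_le hyx

theorem tentTrain_le_one {θ : ℝ} (hθ : 0 ≤ θ) (ξ : ℝ) : tentTrain θ ξ ≤ 1 := by
  unfold tentTrain
  split_ifs with h
  · have hn : (1 : ℝ) ≤ h.choose := by exact_mod_cast one_le_two.trans h.choose_spec.1
    exact (tent_le _ _ _ (Real.rpow_nonneg (by linarith) _)).trans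
      (Real.rpow_le_one_of_one_le_of_nonpos hn (neg_nonpos.2 hθ))
  · exact zero_le_one

theorem abs_wFn_sub_le {σ : ℝ} (hσ0 : 0 < σ) (hσ1 : σ ≤ 1) (θ x y : ℝ) :
    |wFn σ θ y - wFn σ θ x| ≤ |y - x| ^ σ := by
  rw [wFn_eq_tentTrain_rpow hσ0, wFn_eq_tentTrain_rpow hσ0]
  calc |tentTrain θ y ^ σ - tentTrain θ x ^ σ|
      ≤ |tentTrain θ y - tentTrain θ x| ^ σ :=
        Real.abs_rpow_sub_rpow_le hσ0.le hσ1 (tentTrain_nonneg θ y) (tentTrain_nonneg θ x)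
    _ ≤ |y - x| ^ σ := by
        refine Real.rpow_le_rpow (abs_nonneg _) ?_ hσ0.le
        simpa [Real.dist_eq] using (tentTrain_lipschitzWith θ).dist_le_mul y x

theorem continuous_wFn {σ : ℝ} (hσ : 0 < σ) (θ : ℝ) : Continuous (wFn σ θ) := by
  rw [continuous_congr (wFn_eq_tentTrain_rpow hσ θ)]
  exact (tentTrain_lipschitzWith θ).continuous.rpow_const fun _ => Or.inr hσ.le

theorem memLp_top_wFn {σ θ : ℝ} (hσ : 0 < σ) (hθ : 0 ≤ θ) : MemLp (wFn σ θ) ⊤ volume := by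
  refine memLp_top_of_bound (continuous_wFn hσ θ).aestronglyMeasurable 1 (ae_of_all _ fun ξ => ?_)
  rw [wFn_eq_tentTrain_rpow hσ, Real.norm_eq_abs,
    abs_of_nonneg (Real.rpow_nonneg (tentTrain_nonneg θ ξ) σ)]
  exact Real.rpow_le_one (tentTrain_nonneg θ ξ) (tentTrain_le_one hθ ξ) hσ.le

theorem wFn_four_add_sub_wFn_four {σ θ h : ℝ} (hσ : 0 < σ) (h0 : 0 ≤ h)
    (hh : h ≤ (2 : ℝ) ^ (-θ)) : wFn σ θ (4 + h) - wFn σ θ 4 = h ^ σ := by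
  have ha2 := aSeq_two θ
  have ha3 : aSeq θ (2 + 1) = 4 + 4 * (2 : ℝ) ^ (-θ) := by
    rw [aSeq_succ θ one_le_two, ha2, Nat.cast_two]
  have hd : 0 < (2 : ℝ) ^ (-θ) := Real.rpow_pos_of_pos two_pos _
  have h4 : tentTrain θ 4 = 0 :=
    le_antisymm (by simpa [ha2] using tentTrain_le_aSeq_sub (θ := θ) ha2.ge)
      (tentTrain_nonneg θ 4)
  have h4h : tentTrain θ (4 + h) = h := by
    rw [tentTrain_eq le_rfl ⟨by linarith, by linarith⟩, ha2, Nat.cast_two,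
      tent_eq_sub_left (by linarith) (by linarith), add_sub_cancel_left]
  rw [wFn_eq_tentTrain_rpow hσ, wFn_eq_tentTrain_rpow hσ, h4, h4h, Real.zero_rpow hσ.ne',
    sub_zero]

theorem eLpNorm_wFn_sub_shift_restrict_Ioo {σ θ h : ℝ} (hσ0 : 0 < σ) (hσ1 : σ ≤ 1) (h0 : 0 < h)
    (hh : h ≤ (2 : ℝ) ^ (-θ)) :
    eLpNorm (fun x => wFn σ θ (x + h) - wFn σ θ x) ⊤ (volume.restrict (Ioo (4 - h) 4)) =
      ENNReal.ofReal (h ^ σ) := by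
  refine le_antisymm ?_ ?_
  · simpa [abs_of_pos h0] using eLpNorm_top_sub_shift_le (abs_wFn_sub_le hσ0 hσ1 θ) h _
  · have hcont : Continuous fun x => wFn σ θ (x + h) - wFn σ θ x :=
      ((continuous_wFn hσ0 θ).comp (continuous_add_const h)).sub (continuous_wFn hσ0 θ)
    have hΔ := enorm_le_eLpNormEssSup_restrict_Ioo (a := 4 - h) (b := 4) (by linarith)
      hcont.continuousAt.continuousWithinAt
    rw [wFn_four_add_sub_wFn_four hσ0 h0.le hh,
      Real.enorm_of_nonneg (Real.rpow_nonneg h0.le σ)] at hΔ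
    rwa [eLpNorm_exponent_top]

theorem one_div_six_rpow_le_two_rpow_neg {θ : ℝ} (hθ : 0 ≤ θ) : (1 / 6 : ℝ) ^ θ ≤ 2 ^ (-θ) := by
  rw [Real.rpow_neg zero_le_two, ← Real.inv_rpow zero_le_two]
  exact Real.rpow_le_rpow (by norm_num) (by norm_num) hθ

/-- For 0 < σ < 1 < θ and 0 < h ≤ (1/6)^θ: the essential supremum of |Δ_h w_{σ,θ}|
over (a_{2,θ}−h, a_{2,θ}) = (4−h, 4) equals h^σ; consequently ‖Δ_h w_{σ,θ}‖_{L_∞} ≍ h^σ,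
so w_{σ,θ} ∈ B^σ_{∞,∞}(ℝ) but w_{σ,θ} ∉ B^σ_{∞,q}(ℝ) for every q < ∞
(via the characterization by first-order differences). -/
theorem stmt9 (σ θ : ℝ) (hσ0 : 0 < σ) (hσ1 : σ < 1) (hθ : 1 < θ) :
    (∀ h : ℝ, 0 < h → h ≤ (1 / 6 : ℝ) ^ θ →
      eLpNorm (fun x => wFn σ θ (x + h) - wFn σ θ x) ⊤
          (volume.restrict (Set.Ioo (4 - h) 4)) = ENNReal.ofReal (h ^ σ)) ∧
    (∃ c C : ℝ, 0 < c ∧ 0 < C ∧ ∀ h : ℝ, 0 < h → h ≤ (1 / 6 : ℝ) ^ θ →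
      ENNReal.ofReal (c * h ^ σ) ≤
          eLpNorm (fun x => wFn σ θ (x + h) - wFn σ θ x) ⊤ volume ∧
      eLpNorm (fun x => wFn σ θ (x + h) - wFn σ θ x) ⊤ volume ≤
          ENNReal.ofReal (C * h ^ σ)) ∧
    (MeasureTheory.MemLp (wFn σ θ) ⊤ volume ∧
      ∃ C : ℝ, ∀ t : ℝ, 0 < t → t ≤ (1 / 6 : ℝ) ^ θ → ∀ h : ℝ, |h| ≤ t →
        eLpNorm (fun x => wFn σ θ (x + h) - wFn σ θ x) ⊤ volume ≤
          ENNReal.ofReal (C * t ^ σ)) ∧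
    (∀ q : ℝ, 0 < q →
      ∫⁻ t in Set.Ioc (0 : ℝ) ((1 / 6 : ℝ) ^ θ),
        (⨆ h ∈ Set.Icc (-t) t,
            eLpNorm (fun x => wFn σ θ (x + h) - wFn σ θ x) ⊤ volume) ^ q *
          ENNReal.ofReal (t ^ (-(σ * q) - 1)) = ⊤) := by
  have hθ0 : 0 ≤ θ := by linarith
  have hexact : ∀ h : ℝ, 0 < h → h ≤ (1 / 6 : ℝ) ^ θ →
      eLpNorm (fun x => wFn σ θ (x + h) - wFn σ θ x) ⊤ (volume.restrict (Ioo (4 - h) 4)) =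
        ENNReal.ofReal (h ^ σ) := fun h h0 hh =>
    eLpNorm_wFn_sub_shift_restrict_Ioo hσ0 hσ1.le h0
      (hh.trans (one_div_six_rpow_le_two_rpow_neg hθ0))
  have hlower : ∀ h : ℝ, 0 < h → h ≤ (1 / 6 : ℝ) ^ θ →
      ENNReal.ofReal (h ^ σ) ≤ eLpNorm (fun x => wFn σ θ (x + h) - wFn σ θ x) ⊤ volume :=
    fun h h0 hh => (hexact h h0 hh).symm.le.trans (eLpNorm_mono_measure _ Measure.restrict_le_self)
  have hupper (h : ℝ) :
      eLpNorm (fun x => wFn σ θ (x + h) - wFn σ θ x) ⊤ volume ≤ ENNReal.ofReal (|h| ^ σ) :=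
    eLpNorm_top_sub_shift_le (abs_wFn_sub_le hσ0 hσ1.le θ) h volume
  refine ⟨hexact, ⟨1, 1, one_pos, one_pos, fun h h0 hh => ?_⟩,
    ⟨memLp_top_wFn hσ0 hθ0, 1, fun t _ _ h hh => ?_⟩, fun q hq => ?_⟩
  · simp only [one_mul]
    exact ⟨hlower h h0 hh, by simpa [abs_of_pos h0] using hupper h⟩
  · rw [one_mul]
    exact (hupper h).trans (ENNReal.ofReal_le_ofReal (Real.rpow_le_rpow (abs_nonneg h) hh hσ0.le))
  · refine lintegral_rpow_mul_rpow_eq_top_of_rpow_le hq.le (by positivity) fun t ht => ?_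
    exact (hlower t ht.1 ht.2).trans <| le_biSup
      (fun h => eLpNorm (fun x => wFn σ θ (x + h) - wFn σ θ x) ⊤ volume)
      ⟨by linarith [ht.1], le_rfl⟩
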